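/- Let G be a sign-invertible finite simple graph. Then either G is K2-reducible, or every K2-irreducible subgraph of G is unimodular. -/

import Mathlib

/-!
A sign-invertible graph is unimodular: its adjacency matrix and the inverse are both integer
matrices, so the determinant is a unit of `ℤ`. A `K₂`-reduction at a pendant vertex `v` with
neighbour `u` only changes the sign of the determinant: in the Schur complement with respect to
the block `!![0, 1; 1, 0]` on `{u, v}` the correction term vanishes, since `v` sees nothing but
`u`. Hence every graph reached from `G` by `K₂`-reductions, in particular every
`K₂`-irreducible subgraph, is unimodular as well.
-/

open scoped Classical

namespace SignInv

variable {V : Type*} {W : Type*}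

/-- The adjacency matrix of `G` over `ℚ`. -/
noncomputable def adjM [Fintype V] (G : SimpleGraph V) : Matrix V V ℚ :=
  G.adjMatrix ℚ

/-- The determinant of (the adjacency matrix of) `G`; it equals `1` for the empty graph. -/
noncomputable def detG [Fintype V] (G : SimpleGraph V) : ℚ :=
  (adjM G).det

/-- `G` is unimodular if `det G ∈ {-1, 1}`. -/
def Unimodular [Fintype V] (G : SimpleGraph V) : Prop :=
  detG G = 1 ∨ detG G = -1

/-- `G` is invertible if `det G ≠ 0`. -/
def InvertibleGraph [Fintype V] (G : SimpleGraph V) : Prop :=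
  detG G ≠ 0

/-- `G` is sign-invertible if its adjacency matrix is invertible and all entries of the
inverse matrix lie in `{-1, 0, 1}`. -/
def SignInvertible [Fintype V] (G : SimpleGraph V) : Prop :=
  IsUnit (adjM G) ∧ ∀ x y : V, (adjM G)⁻¹ x y ∈ ({-1, 0, 1} : Set ℚ)

/-- A perfect 2-matching of `G`: a spanning subgraph each of whose components is a cycle or
a single edge, i.e. all degrees are `1` or `2` and a degree-one vertex is matched to a
degree-one vertex. -/
def IsPerfect2Matching [Fintype V] (G : SimpleGraph V) (H : G.Subgraph) : Prop :=
  H.IsSpanning ∧ (∀ v : V, H.degree v = 1 ∨ H.degree v = 2) ∧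
    ∀ v w : V, H.Adj v w → H.degree v = 1 → H.degree w = 1

def HasPerfect2Matching [Fintype V] (G : SimpleGraph V) : Prop :=
  ∃ H : G.Subgraph, IsPerfect2Matching G H

/-- A feasible `(x,y)`-path: a path `P` such that `G - V(P)` has a perfect 2-matching
(the empty graph counts as having one). -/
def FeasiblePath [Fintype V] (G : SimpleGraph V) {x y : V} (P : G.Walk x y) : Prop :=
  P.IsPath ∧ HasPerfect2Matching (G.induce {v : V | v ∉ P.support})

/-- `∑_{P ∈ 𝒫_{xy}} (-1)^{|E(P)|} det (G - V(P))` over all feasible `(x,y)`-paths. -/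
noncomputable def pathSum [Fintype V] (G : SimpleGraph V) (x y : V) : ℚ :=
  ∑ᶠ (P : G.Walk x y) (_ : FeasiblePath G P),
    (-1 : ℚ) ^ P.length * detG (G.induce {v : V | v ∉ P.support})

/-- One `K₂`-reduction step: `v ∈ s` has a unique neighbour `u` inside `s`, and both are
removed from `s`. -/
def K2Step (G : SimpleGraph V) (s t : Set V) : Prop :=
  ∃ u v : V, u ∈ s ∧ v ∈ s ∧ G.Adj u v ∧ (∀ w ∈ s, G.Adj v w → w = u) ∧
    t = s \ {u, v}

/-- `G` is `K₂`-reducible if some sequence of `K₂`-reductions empties the vertex set. -/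
def K2Reducible (G : SimpleGraph V) : Prop :=
  Relation.ReflTransGen (K2Step G) Set.univ (∅ : Set V)

/-- `v` has degree one in the subgraph of `G` induced on `s`. -/
def DegreeOneIn (G : SimpleGraph V) (s : Set V) (v : V) : Prop :=
  v ∈ s ∧ ∃ u ∈ s, G.Adj v u ∧ ∀ w ∈ s, G.Adj v w → w = u

/-- `s` induces a `K₂`-irreducible subgraph of `G`: it is obtained from `G` by a sequence of
`K₂`-reductions and has no vertex of degree one. -/
def K2Irreducible (G : SimpleGraph V) (s : Set V) : Prop :=
  Relation.ReflTransGen (K2Step G) Set.univ s ∧ ∀ v : V, ¬ DegreeOneIn G s v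

/-- `v` has degree one in `H`. -/
def DegreeOne (H : SimpleGraph W) (v : W) : Prop :=
  ∃! u : W, H.Adj v u

/-- A peg of the cycle `C` is an edge of the matching `M` with exactly one endpoint on `C`. -/
def IsPeg (G : SimpleGraph V) (M : G.Subgraph) {c : V} (C : G.Walk c c)
    (e : Sym2 V) : Prop :=
  e ∈ M.edgeSet ∧ ∃ u v : V, e = s(u, v) ∧ u ∈ C.support ∧ v ∉ C.support

noncomputable def pegCount (G : SimpleGraph V) (M : G.Subgraph) {c : V}
    (C : G.Walk c c) : ℕ :=
  {e : Sym2 V | IsPeg G M C e}.ncard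

/-- `v` is the attachment of the peg `e` of the cycle `C`. -/
def IsAttachment (G : SimpleGraph V) (M : G.Subgraph) {c : V} (C : G.Walk c c)
    (e : Sym2 V) (v : V) : Prop :=
  IsPeg G M C e ∧ v ∈ e ∧ v ∈ C.support

/-- `v1, v2` separate the cycle `C` into two paths whose numbers of vertices are both even
and not congruent to each other modulo 4. -/
def SeparatesEvenNoncong (G : SimpleGraph V) {c : V} (C : G.Walk c c)
    (v1 v2 : V) : Prop :=
  ∃ (W1 W2 : G.Walk v1 v2), W1.IsPath ∧ W2.IsPath ∧
    (∀ e : Sym2 V, e ∈ C.edges ↔ (e ∈ W1.edges ∨ e ∈ W2.edges)) ∧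
    (∀ e : Sym2 V, e ∈ W1.edges → e ∉ W2.edges) ∧
    W1.support.length % 2 = 0 ∧ W2.support.length % 2 = 0 ∧
    ¬ (W1.support.length % 4 = W2.support.length % 4)

/-- The peg condition for a cycle `C`: at least three pegs, or exactly two pegs whose
attachments separate `C` into two paths with even, non-congruent (mod 4) numbers of
vertices. -/
def PegCondition (G : SimpleGraph V) (M : G.Subgraph) {c : V}
    (C : G.Walk c c) : Prop :=
  3 ≤ pegCount G M C ∨
  (pegCount G M C = 2 ∧
    ∀ (e1 e2 : Sym2 V) (v1 v2 : V), e1 ≠ e2 →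
      IsAttachment G M C e1 v1 → IsAttachment G M C e2 v2 →
      SeparatesEvenNoncong G C v1 v2)

/-- Every vertex of `s` has at least two neighbours inside `s`. -/
def MinDeg2On (G : SimpleGraph V) (s : Set V) : Prop :=
  ∀ v ∈ s, ∃ u w : V, u ∈ s ∧ w ∈ s ∧ u ≠ w ∧ G.Adj v u ∧ G.Adj v w

/-- The vertex set of the 2-core of `G` (maximal set inducing minimum degree ≥ 2). -/
def twoCoreSet (G : SimpleGraph V) : Set V :=
  ⋃₀ {s : Set V | MinDeg2On G s}

/-- All pegs of all cycles of `G`. -/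
def pegSet (G : SimpleGraph V) (M : G.Subgraph) : Set (Sym2 V) :=
  {e | ∃ (c : V) (C : G.Walk c c), C.IsCycle ∧ IsPeg G M C e}

def semiTwoCoreVerts (G : SimpleGraph V) (M : G.Subgraph) : Set V :=
  twoCoreSet G ∪ {v | ∃ e ∈ pegSet G M, v ∈ e}

def semiTwoCoreEdges (G : SimpleGraph V) (M : G.Subgraph) : Set (Sym2 V) :=
  {e | e ∈ G.edgeSet ∧ ∀ v ∈ e, v ∈ twoCoreSet G} ∪ pegSet G M

/-- The semi-2-core of `G`: the 2-core together with all pegs, as a graph. -/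
def semiTwoCore (G : SimpleGraph V) (M : G.Subgraph) :
    SimpleGraph ↥(semiTwoCoreVerts G M) :=
  (G ⊓ SimpleGraph.fromEdgeSet (semiTwoCoreEdges G M)).induce (semiTwoCoreVerts G M)

/-- Witness data for `H` being a theta graph `Θ(a,b,c)` with central paths with vertex sets
`S1, S2, S3`: two distinct vertices joined by three internally disjoint paths having
`a`, `b`, `c` vertices, covering all vertices and all edges of `H`. -/
def ThetaWitness (H : SimpleGraph W) (a b c : ℕ)
    (S1 S2 S3 : Set W) : Prop :=
  ∃ (x y : W) (P1 P2 P3 : H.Walk x y),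
    x ≠ y ∧ P1.IsPath ∧ P2.IsPath ∧ P3.IsPath ∧
    P1.support.length = a ∧ P2.support.length = b ∧ P3.support.length = c ∧
    (∀ v : W, v ∈ P1.support → v ∈ P2.support → v = x ∨ v = y) ∧
    (∀ v : W, v ∈ P1.support → v ∈ P3.support → v = x ∨ v = y) ∧
    (∀ v : W, v ∈ P2.support → v ∈ P3.support → v = x ∨ v = y) ∧
    (∀ v : W, v ∈ P1.support ∨ v ∈ P2.support ∨ v ∈ P3.support) ∧
    H.edgeSet = {e | e ∈ P1.edges ∨ e ∈ P2.edges ∨ e ∈ P3.edges} ∧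
    S1 = {v | v ∈ P1.support} ∧ S2 = {v | v ∈ P2.support} ∧
    S3 = {v | v ∈ P3.support}

/-- `H` is a theta graph `Θ(a,b,c)`. -/
def IsThetaGraph (H : SimpleGraph W) (a b c : ℕ) : Prop :=
  ∃ S1 S2 S3 : Set W, ThetaWitness H a b c S1 S2 S3

/-- `H` is a barbell graph `B(a,b;t)`: two cycles of lengths `a` and `b` joined by a path
with `t` vertices internally disjoint from the cycles (for `t = 1` the cycles share exactly
one vertex). -/
def IsBarbell (H : SimpleGraph W) (a b t : ℕ) : Prop :=
  ∃ (u v : W) (C1 : H.Walk u u) (C2 : H.Walk v v) (P : H.Walk u v),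
    C1.IsCycle ∧ C2.IsCycle ∧ P.IsPath ∧
    C1.length = a ∧ C2.length = b ∧ P.support.length = t ∧
    (∀ w : W, w ∈ C1.support → w ∈ C2.support → w = u ∧ w = v) ∧
    (∀ w : W, w ∈ P.support → w ∈ C1.support → w = u) ∧
    (∀ w : W, w ∈ P.support → w ∈ C2.support → w = v) ∧
    (∀ w : W, w ∈ C1.support ∨ w ∈ C2.support ∨ w ∈ P.support) ∧
    H.edgeSet = {e | e ∈ C1.edges ∨ e ∈ C2.edges ∨ e ∈ P.edges}

/-- `H` is a cycle graph of length `n`. -/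
def IsCycleGraphOn (H : SimpleGraph W) (n : ℕ) : Prop :=
  ∃ (c : W) (C : H.Walk c c), C.IsCycle ∧ C.length = n ∧
    (∀ v : W, v ∈ C.support) ∧ H.edgeSet = {e | e ∈ C.edges}

/-- `P` is `MM`-alternating: the edges of `P` lying in `M` form a perfect matching of `P`. -/
def MMAlternating (G : SimpleGraph V) (M : G.Subgraph) {x y : V}
    (P : G.Walk x y) : Prop :=
  ∀ v ∈ P.support, ∃! e : Sym2 V, e ∈ P.edges ∧ e ∈ M.edgeSet ∧ v ∈ e

/-- The number of feasible `(x,y)`-paths with an odd number of edges outside `M`. -/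
noncomputable def tauOdd [Fintype V] (G : SimpleGraph V) (M : G.Subgraph)
    (x y : V) : ℕ :=
  {P : G.Walk x y | FeasiblePath G P ∧
    (P.edges.countP fun e => decide (e ∉ M.edgeSet)) % 2 = 1}.ncard

/-- The number of feasible `(x,y)`-paths with an even number of edges outside `M`. -/
noncomputable def tauEven [Fintype V] (G : SimpleGraph V) (M : G.Subgraph)
    (x y : V) : ℕ :=
  {P : G.Walk x y | FeasiblePath G P ∧
    (P.edges.countP fun e => decide (e ∉ M.edgeSet)) % 2 = 0}.ncard

/-- A crab-graph: a `K₂`-reducible bicyclic graph whose 2-core is a theta graph, having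
exactly two degree-one vertices `x`, `y` and exactly three feasible `(x,y)`-paths, each with
an even number of vertices, these numbers being not all congruent modulo 4. -/
def IsCrabGraph [Fintype W] (H : SimpleGraph W) : Prop :=
  K2Reducible H ∧ H.Connected ∧ H.edgeSet.ncard = Fintype.card W + 1 ∧
  (∃ a b c : ℕ, IsThetaGraph (H.induce (twoCoreSet H)) a b c) ∧
  ∃ x y : W, x ≠ y ∧ DegreeOne H x ∧ DegreeOne H y ∧
    (∀ v : W, DegreeOne H v → v = x ∨ v = y) ∧
    ∃ P1 P2 P3 : H.Walk x y,
      FeasiblePath H P1 ∧ FeasiblePath H P2 ∧ FeasiblePath H P3 ∧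
      P1 ≠ P2 ∧ P1 ≠ P3 ∧ P2 ≠ P3 ∧
      (∀ P : H.Walk x y, FeasiblePath H P → P = P1 ∨ P = P2 ∨ P = P3) ∧
      P1.support.length % 2 = 0 ∧ P2.support.length % 2 = 0 ∧
      P3.support.length % 2 = 0 ∧
      ¬ (P1.support.length % 4 = P2.support.length % 4 ∧
         P2.support.length % 4 = P3.support.length % 4)

theorem _root_.Matrix.det_eq_neg_det_toBlocks₁₁_of_pendant {R m : Type*} [CommRing R]
    [Fintype m] [DecidableEq m] {M : Matrix (m ⊕ Fin 2) (m ⊕ Fin 2) R}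
    (h₀₀ : M (.inr 0) (.inr 0) = 0)
    (hrow : ∀ w, M (.inr 1) w = if w = .inr 0 then 1 else 0)
    (hcol : ∀ w, M w (.inr 1) = if w = .inr 0 then 1 else 0) :
    M.det = -M.toBlocks₁₁.det := by
  have hD : M.toBlocks₂₂ = !![0, 1; 1, 0] := by
    ext i j
    fin_cases i <;> fin_cases j <;> simp [Matrix.toBlocks₂₂, h₀₀, hrow, hcol]
  have hDD : M.toBlocks₂₂ * M.toBlocks₂₂ = 1 := by
    rw [hD]; ext i j; fin_cases i <;> fin_cases j <;> simp
  let : Invertible M.toBlocks₂₂ := ⟨M.toBlocks₂₂, hDD, hDD⟩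
  -- row and column `inr 1` vanish off `inr 0`, while `⅟D` swaps `inr 0` and `inr 1`
  have hschur : M.toBlocks₁₂ * ⅟M.toBlocks₂₂ * M.toBlocks₂₁ = 0 := by
    ext w w'
    simp [Matrix.mul_apply, Fin.sum_univ_two, hD, Matrix.toBlocks₁₂, Matrix.toBlocks₂₁, hrow,
      hcol, show ⅟M.toBlocks₂₂ = M.toBlocks₂₂ from rfl]
  calc M.det = (Matrix.fromBlocks M.toBlocks₁₁ M.toBlocks₁₂ M.toBlocks₂₁ M.toBlocks₂₂).det := by
        rw [Matrix.fromBlocks_toBlocks]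
    _ = -M.toBlocks₁₁.det := by
        rw [Matrix.det_fromBlocks₂₂, hschur, sub_zero, hD, Matrix.det_fin_two_of]; ring

theorem _root_.Matrix.det_eq_neg_det_submatrix_of_pendant {R n m : Type*} [CommRing R]
    [Fintype n] [DecidableEq n] [Fintype m] [DecidableEq m] {A : Matrix n n R} {u v : n}
    {g : m → n} (hg : Function.Injective g) (hrange : ∀ w, w ∈ Set.range g ↔ w ≠ u ∧ w ≠ v)
    (huv : u ≠ v) (huu : A u u = 0) (hrow : ∀ w, A v w = if w = u then 1 else 0)
    (hcol : ∀ w, A w v = if w = u then 1 else 0) :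
    A.det = -(A.submatrix g g).det := by
  have hinj : Function.Injective (Sum.elim g ![u, v]) := by
    refine hg.sumElim (fun i j hij => ?_) fun a i hai => ?_
    · fin_cases i <;> fin_cases j <;> simp_all [huv.symm]
    · have := (hrange (g a)).1 ⟨a, rfl⟩
      fin_cases i <;> simp_all
  have hsurj : Function.Surjective (Sum.elim g ![u, v]) := by
    intro w
    by_cases hw : w ∈ Set.range g
    · obtain ⟨a, rfl⟩ := hw
      exact ⟨.inl a, rfl⟩
    · obtain rfl | rfl : w = u ∨ w = v := by
        have := (hrange w).not.1 hw; tauto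
      exacts [⟨.inr 0, rfl⟩, ⟨.inr 1, rfl⟩]
  let e := Equiv.ofBijective _ ⟨hinj, hsurj⟩
  have he : ∀ w, e w = u ↔ w = .inr 0 := fun w => hinj.eq_iff' rfl
  rw [← Matrix.det_submatrix_equiv_self e A]
  refine Matrix.det_eq_neg_det_toBlocks₁₁_of_pendant huu (fun w => ?_) fun w => ?_
  · rw [Matrix.submatrix_apply, show e (.inr 1) = v from rfl, hrow]
    simp only [he]
  · rw [Matrix.submatrix_apply, show e (.inr 1) = v from rfl, hcol]
    simp only [he]

theorem _root_.Matrix.det_map_intCast_eq_one_or_neg_one {R n : Type*} [CommRing R] [CharZero R]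
    [Fintype n] [DecidableEq n] {A B : Matrix n n ℤ}
    (h : A.map (Int.cast : ℤ → R) * B.map Int.cast = 1) :
    (A.map (Int.cast : ℤ → R)).det = 1 ∨ (A.map (Int.cast : ℤ → R)).det = -1 := by
  have hAB : A * B = 1 := by
    refine Matrix.map_injective (Int.cast_injective (α := R)) ?_
    change (Int.castRingHom R).mapMatrix (A * B) = (Int.castRingHom R).mapMatrix 1
    rwa [map_mul, map_one]
  rw [← Int.cast_det]
  rcases Int.isUnit_iff.1 (Matrix.isUnit_det_of_right_inverse hAB) with h | h <;> simp [h]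

theorem detG_eq_det [Fintype V] [DecidableEq V] (G : SimpleGraph V)
    [DecidableRel G.Adj] : detG G = (G.adjMatrix ℚ).det := by
  unfold detG adjM
  congr!

theorem detG_eq_of_iso [Fintype V] [Fintype W] {G : SimpleGraph V}
    {H : SimpleGraph W} (f : G ≃g H) : detG G = detG H := by
  rw [detG_eq_det, detG_eq_det, ← f.reindex_adjMatrix ℚ, Matrix.det_reindex_self]

theorem SignInvertible.unimodular [Fintype V] {G : SimpleGraph V}
    (h : SignInvertible G) : Unimodular G := by
  obtain ⟨hunit, hinv⟩ := h
  simp only [Set.mem_insert_iff, Set.mem_singleton_iff] at hinv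
  have hint (x y : V) : ∃ k : ℤ, (k : ℚ) = (adjM G)⁻¹ x y := by
    rcases hinv x y with h | h | h
    exacts [⟨-1, by simp [h]⟩, ⟨0, by simp [h]⟩, ⟨1, by simp [h]⟩]
  choose B hB using hint
  have hA : adjM G = (G.adjMatrix ℤ).map Int.cast := by
    ext x y
    by_cases hxy : G.Adj x y <;> simp [adjM, hxy]
  have hAB : (G.adjMatrix ℤ).map (Int.cast : ℤ → ℚ) * (Matrix.of B).map Int.cast = 1 := by
    rw [← hA, show (Matrix.of B).map Int.cast = (adjM G)⁻¹ by ext; simp [hB]]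
    exact Matrix.mul_nonsing_inv _ ((Matrix.isUnit_iff_isUnit_det _).1 hunit)
  rw [Unimodular, detG, hA]
  exact Matrix.det_map_intCast_eq_one_or_neg_one hAB

theorem detG_induce_eq_neg_of_k2Step [Fintype V] {G : SimpleGraph V}
    {s t : Set V} (h : K2Step G s t) : detG (G.induce s) = -detG (G.induce t) := by
  obtain ⟨u, v, hu, hv, hadj, hleaf, ht⟩ := h
  let f := G.induceHomOfLE (ht ▸ Set.sdiff_subset : t ⊆ s)
  rw [detG_eq_det, detG_eq_det, ← f.submatrix_adjMatrix ℚ]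
  have hrow (w : s) : (G.induce s).adjMatrix ℚ ⟨v, hv⟩ w = if w = ⟨u, hu⟩ then 1 else 0 := by
    rw [SimpleGraph.adjMatrix_apply]
    refine if_congr ⟨fun h => Subtype.ext (hleaf _ w.2 h), ?_⟩ rfl rfl
    rintro rfl
    exact hadj.symm
  refine Matrix.det_eq_neg_det_submatrix_of_pendant f.injective (fun w => ?_)
    (by simpa using hadj.ne) (by simp) hrow fun w => ?_
  · subst ht
    simp [f, Subtype.ext_iff, and_comm]
  · rw [← hrow w]
    exact (G.induce s).isSymm_adjMatrix.apply _ _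

theorem Unimodular.induce_of_reflTransGen [Fintype V] {G : SimpleGraph V}
    (hG : Unimodular G) {s : Set V} (hs : Relation.ReflTransGen (K2Step G) Set.univ s) :
    Unimodular (G.induce s) := by
  induction hs with
  | refl =>
    unfold Unimodular at hG ⊢
    -- `convert` reconciles `Set.fintypeUniv` with the `Subtype.fintype` instance of the goal
    convert hG using 2 <;> convert detG_eq_of_iso G.induceUnivIso
  | tail _ hstep ih =>
    rw [Unimodular, detG_induce_eq_neg_of_k2Step hstep] at ih
    rcases ih with h | h
    exacts [.inr (by linarith), .inl (by linarith)]

/-- If `G` is sign-invertible then `G` is `K₂`-reducible or every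
`K₂`-irreducible subgraph of `G` is unimodular. -/
theorem signInvertible_k2Irreducible_unimodular {V : Type*} [Fintype V]
    (G : SimpleGraph V) (h : SignInvertible G) :
    K2Reducible G ∨ ∀ s : Set V, K2Irreducible G s → Unimodular (G.induce s) :=
  .inr fun _ hs => h.unimodular.induce_of_reflTransGen hs.1

end SignInv
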